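/- arXiv:1305.4058 — 2 statements merged into one kernel-verified Lean document; each statement's English description precedes it below -/
import Mathlib

section
/- For every fixed t ≥ 0, the set {x ∈ D : θ_x(t) < ∞} is measurable, and the map x ↦ x(θ_x(t)), defined on this set, is measurable with respect to the (trace of the) Kolmogorov σ-algebra on D and the Borel σ-algebra on ℝ^d. -/
open scoped NNReal ENNReal Classical
open Filter Topology

noncomputable section

/-- Left limit of `x` at `t`, with the convention `x(0−) = x(0)`. -/
def leftLimit {d : ℕ} (x : ℝ≥0 → Fin d → ℝ) (t : ℝ≥0) : Fin d → ℝ :=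
  if 0 < t then limUnder (nhdsWithin t (Set.Iio t)) x else x 0

/-- `x : [0,∞) → ℝ^d` is càdlàg: right-continuous everywhere, with left limits at every `t > 0`. -/
def IsCadlag {d : ℕ} (x : ℝ≥0 → Fin d → ℝ) : Prop :=
  (∀ t : ℝ≥0, ContinuousWithinAt x (Set.Ici t) t) ∧
  (∀ t : ℝ≥0, 0 < t →
    ∃ L : Fin d → ℝ, Filter.Tendsto x (nhdsWithin t (Set.Iio t)) (nhds L))

/-- `x` is constant on the set `I`. -/
def ConstOn {d : ℕ} (x : ℝ≥0 → Fin d → ℝ) (I : Set ℝ≥0) : Prop :=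
  ∀ s ∈ I, ∀ s' ∈ I, x s = x s'

/-- `η_x(t) = sup {s ∈ [0,t) : x(s) ≠ x(t)}`, with the convention `sup ∅ = 0`. -/
def eta {d : ℕ} (x : ℝ≥0 → Fin d → ℝ) (t : ℝ≥0) : ℝ≥0 :=
  sSup {s : ℝ≥0 | s < t ∧ x s ≠ x t}

/-- The set of discontinuity points of `x`: the `t > 0` where `x(t) ≠ x(t−)`. -/
def disc {d : ℕ} (x : ℝ≥0 → Fin d → ℝ) : Set ℝ≥0 :=
  {t : ℝ≥0 | 0 < t ∧ x t ≠ leftLimit x t}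

/-- `θ_x(t) = inf {s ≥ t : x(s) ≠ x(t−)} ∈ [0,∞]`, with the convention `inf ∅ = ∞`. -/
def theta {d : ℕ} (x : ℝ≥0 → Fin d → ℝ) (t : ℝ≥0) : ℝ≥0∞ :=
  sInf ((fun s : ℝ≥0 => (s : ℝ≥0∞)) '' {s : ℝ≥0 | t ≤ s ∧ x s ≠ leftLimit x t})

/-- The map `f` replacing each "stair" of `x` by the linear interpolation of its endpoints:
`f(x)(t) = x(η_x(t)) + ((t − η_x(t))/(θ_x(t) − η_x(t))) • (x(θ_x(t)) − x(η_x(t)))`,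
with `f(x)(t) = x(t)` when `θ_x(t) = η_x(t)` or `θ_x(t) = ∞`. -/
def fmap {d : ℕ} (x : ℝ≥0 → Fin d → ℝ) : ℝ≥0 → Fin d → ℝ := fun t =>
  if theta x t = ((eta x t : ℝ≥0) : ℝ≥0∞) ∨ theta x t = ⊤ then x t
  else x (eta x t) +
    (((t : ℝ) - (eta x t : ℝ)) / ((theta x t).toReal - (eta x t : ℝ))) •
      (x (theta x t).toNNReal - x (eta x t))

/-- The space `D` of càdlàg functions `[0,∞) → ℝ^d`. -/
def Cadlag (d : ℕ) : Type := {x : ℝ≥0 → Fin d → ℝ // IsCadlag x}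

/-- The Kolmogorov σ-algebra on `D`: the trace of the σ-algebra generated by the coordinate
evaluation maps `x ↦ x(t)`, `t ≥ 0` (i.e. of the product σ-algebra). -/
instance (d : ℕ) : MeasurableSpace (Cadlag d) :=
  MeasurableSpace.comap (fun x : Cadlag d => x.1)
    (inferInstance : MeasurableSpace (ℝ≥0 → Fin d → ℝ))

open Set

/-!
Everything reduces to countably many coordinate evaluations, by right-continuity. The left limit
`x(t−)` is the pointwise limit of `x(sₙ)` along a sequence `sₙ ↑ t`. The time `θ_x(t)` is the
first time `s ≥ t` at which `x` enters the open set `{v ≠ x(t−)}`; a right-continuous path stays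
in an open set for a while after entering it, so this infimum may be taken over a countable dense
set of times. Finally `x(θ)` is the limit of `x(⌈(n+1)θ⌉ / (n+1))`, evaluations at random times
with countably many values, which converge from the right.
-/

lemma tendsto_nat_ceil_mul_div_nhdsGE (r : ℝ≥0) :
    Tendsto (fun n : ℕ => (⌈r * (n + 1)⌉₊ : ℝ≥0) / (n + 1)) atTop (𝓝[≥] r) := by
  have hpos (n : ℕ) : (0 : ℝ≥0) < n + 1 := Nat.cast_add_one_pos n
  have lower (n : ℕ) : r ≤ (⌈r * (n + 1)⌉₊ : ℝ≥0) / (n + 1) :=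
    (le_div_iff₀ (hpos n)).2 (Nat.le_ceil _)
  have upper (n : ℕ) : (⌈r * (n + 1)⌉₊ : ℝ≥0) / (n + 1) ≤ r + 1 / (n + 1) := by
    rw [div_le_iff₀ (hpos n), add_mul, one_div_mul_cancel (hpos n).ne']
    exact (Nat.ceil_lt_add_one zero_le).le
  have hlim : Tendsto (fun n : ℕ => r + 1 / ((n : ℝ≥0) + 1)) atTop (𝓝 r) := by
    simpa using tendsto_const_nhds.add (tendsto_one_div_add_atTop_nhds_zero_nat (𝕜 := ℝ≥0))
  exact tendsto_nhdsWithin_of_tendsto_nhds_of_eventually_within _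
    (tendsto_of_tendsto_of_tendsto_of_le_of_le tendsto_const_nhds hlim lower upper)
    (Eventually.of_forall lower)

lemma measurable_apply_of_rightContinuous {Ω E : Type*} [MeasurableSpace Ω] [TopologicalSpace E]
    [TopologicalSpace.PseudoMetrizableSpace E] [MeasurableSpace E] [BorelSpace E]
    {X : Ω → ℝ≥0 → E} (hX : ∀ s, Measurable fun ω => X ω s)
    (hright : ∀ ω s, ContinuousWithinAt (X ω) (Ici s) s)
    {τ : Ω → ℝ≥0} (hτ : Measurable τ) :
    Measurable fun ω => X ω (τ ω) := by
  have happrox (n : ℕ) :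
      Measurable fun ω => X ω ((⌈τ ω * (n + 1)⌉₊ : ℝ≥0) / (n + 1)) := by
    have hceil : Measurable fun ω => ⌈τ ω * (n + 1)⌉₊ :=
      Nat.ceil_mono.measurable.comp (hτ.mul_const _)
    have hgrid : Measurable fun p : Ω × ℕ => X p.1 ((p.2 : ℝ≥0) / (n + 1)) :=
      measurable_from_prod_countable_left fun k => hX ((k : ℝ≥0) / (n + 1))
    exact hgrid.comp (measurable_id.prodMk hceil)
  refine measurable_of_tendsto_metrizable' atTop happrox (tendsto_pi_nhds.2 fun ω => ?_)
  exact (hright ω (τ ω)).tendsto.comp (tendsto_nat_ceil_mul_div_nhdsGE (τ ω))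

lemma subset_closure_inter_of_dense {A S : Set ℝ≥0} (hS : Dense S)
    (hA : ∀ s ∈ A, A ∈ 𝓝[>] s) : A ⊆ closure (A ∩ S) := by
  intro s hs
  obtain ⟨b, hsb, hIoo⟩ := mem_nhdsGT_iff_exists_Ioo_subset.1 (hA s hs)
  have : closure (Ioo s b) ⊆ closure (A ∩ S) :=
    closure_minimal ((hS.open_subset_closure_inter isOpen_Ioo).trans
      (closure_mono (inter_subset_inter_left S hIoo))) isClosed_closure
  exact this (by rw [closure_Ioo hsb.ne]; exact left_mem_Icc.2 hsb.le)

lemma sInf_coe_image_inter_of_dense {A S : Set ℝ≥0} (hS : Dense S)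
    (hA : ∀ s ∈ A, A ∈ 𝓝[>] s) :
    sInf (((↑) : ℝ≥0 → ℝ≥0∞) '' (A ∩ S)) = sInf (((↑) : ℝ≥0 → ℝ≥0∞) '' A) := by
  refine le_antisymm ?_ (sInf_le_sInf (image_mono inter_subset_left))
  have hclosed : IsClosed {s : ℝ≥0 | sInf (((↑) : ℝ≥0 → ℝ≥0∞) '' (A ∩ S)) ≤ s} :=
    isClosed_le continuous_const ENNReal.continuous_coe
  refine le_sInf (forall_mem_image.2 fun s hs => ?_)
  exact hclosed.closure_subset_iff.2
    (fun _ hu => sInf_le (mem_image_of_mem ((↑) : ℝ≥0 → ℝ≥0∞) hu))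
    (subset_closure_inter_of_dense hS hA hs)

section

variable {d : ℕ}

lemma leftLimit_eq_of_tendsto {x : ℝ≥0 → Fin d → ℝ} {t : ℝ≥0} {L : Fin d → ℝ} (ht : 0 < t)
    (hL : Tendsto x (𝓝[<] t) (𝓝 L)) : leftLimit x t = L := by
  have : (𝓝[<] t).NeBot := nhdsLT_neBot_of_exists_lt ⟨0, ht⟩
  rw [leftLimit, if_pos ht, hL.limUnder_eq]

namespace Cadlag

lemma measurable_val : Measurable (fun x : Cadlag d => x.1) :=
  measurable_iff_comap_le.2 le_rfl

lemma measurable_eval (s : ℝ≥0) : Measurable (fun x : Cadlag d => x.1 s) :=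
  (measurable_pi_apply s).comp measurable_val

lemma measurable_leftLimit (t : ℝ≥0) : Measurable fun x : Cadlag d => leftLimit x.1 t := by
  rcases eq_zero_or_pos t with rfl | ht
  · simpa [leftLimit] using measurable_eval 0
  obtain ⟨u, -, hu_mem, hu_lim⟩ := exists_seq_strictMono_tendsto' ht
  have hu : Tendsto u atTop (𝓝[<] t) :=
    tendsto_nhdsWithin_iff.2 ⟨hu_lim, Eventually.of_forall fun n => (hu_mem n).2⟩
  refine measurable_of_tendsto_metrizable' atTop (fun n => measurable_eval (u n))
    (tendsto_pi_nhds.2 fun x => ?_)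
  obtain ⟨L, hL⟩ := x.2.2 t ht
  rw [leftLimit_eq_of_tendsto ht hL]
  exact hL.comp hu

lemma theta_eq_biInf_of_dense (x : Cadlag d) (t : ℝ≥0) {S : Set ℝ≥0} (hS : Dense S) :
    theta x.1 t = ⨅ s ∈ S, ⨅ (_ : t ≤ s ∧ x.1 s ≠ leftLimit x.1 t), (s : ℝ≥0∞) := by
  rw [theta, ← sInf_coe_image_inter_of_dense hS, sInf_image]
  · rw [inter_comm]
    exact iInf_congr fun _ => iInf_and
  · rintro s ⟨hts, hs⟩
    filter_upwards [nhdsWithin_mono s Ioi_subset_Ici_self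
      ((x.2.1 s).eventually (eventually_ne_nhds hs)), self_mem_nhdsWithin] with u hu hsu
    exact ⟨hts.trans hsu.le, hu⟩

lemma measurable_theta (t : ℝ≥0) : Measurable fun x : Cadlag d => theta x.1 t := by
  obtain ⟨S, hS_count, hS_dense⟩ := TopologicalSpace.exists_countable_dense ℝ≥0
  simp_rw [theta_eq_biInf_of_dense _ t hS_dense]
  refine Measurable.biInf S hS_count fun s _ => ?_
  simp only [iInf_eq_if]
  refine Measurable.ite ?_ measurable_const measurable_const
  exact (MeasurableSet.const _).inter
    (measurableSet_eq_fun (measurable_eval s) (measurable_leftLimit t)).compl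

end Cadlag

end

theorem measurable_eval_theta_general (d : ℕ) (t : ℝ≥0) :
    MeasurableSet {x : Cadlag d | theta x.1 t < ⊤} ∧
    Measurable (fun p : {x : Cadlag d // theta x.1 t < ⊤} =>
      p.1.1 (theta p.1.1 t).toNNReal) :=
  ⟨Cadlag.measurable_theta t measurableSet_Iio,
    measurable_apply_of_rightContinuous
      (fun s => (Cadlag.measurable_eval s).comp measurable_subtype_coe) (fun p => p.1.2.1)
      (ENNReal.measurable_toNNReal.comp ((Cadlag.measurable_theta t).comp measurable_subtype_coe))⟩

/-- For every fixed `t ≥ 0`, the set `{x ∈ D : θ_x(t) < ∞}` is measurable, and on this set the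
map `x ↦ x(θ_x(t))` is measurable (for the trace of the Kolmogorov σ-algebra). -/
theorem measurable_eval_theta (d : ℕ) (hd : 1 ≤ d) (t : ℝ≥0) :
    MeasurableSet {x : Cadlag d | theta x.1 t < ⊤} ∧
    Measurable (fun p : {x : Cadlag d // theta x.1 t < ⊤} =>
      p.1.1 (theta p.1.1 t).toNNReal) :=
  measurable_eval_theta_general d t
end
end

section
/- Under the CTRW setup, define the continuous-path CTRW by X̄(t) = S(N(t)) + ((S(N(t)+1) − S(N(t)))/(T(N(t)+1) − T(N(t))))·(t − T(N(t))). Then X̄(t) = f(X)(t) for every t ≥ 0, where X(t) = S(N(t)) is the CTRW path; in particular X̄ has continuous trajectories given by the broken line through the points (T(k), S(k)). -/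
open scoped NNReal ENNReal Classical
open Filter Topology

noncomputable section

/-!
`X` is the step function equal to `S k` on `[T k, T (k+1))`. For `t` in that interval,
`η_X(t) = T k`; if `X` does not jump at `t` then `θ_X(t) = T (k+1)` and `f(X)(t)` is the chord
from `(T k, S k)` to `(T (k+1), S (k+1))`, while at a jump time `t = T k` one has
`θ_X(t) = t = η_X(t)`, so `f(X)(t) = S k`, which is the chord's value there too. Consecutive
chords agree at the nodes, and since `T → ∞` the intervals `[T k, T (k+1)]` form a locally
finite closed cover of `[0, ∞)`, so the broken line is continuous.
-/

open Set

theorem exists_le_lt_succ_of_tendsto_atTop {α : Type*} [LinearOrder α] [NoMaxOrder α]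
    {T : ℕ → α} (hdiv : Tendsto T atTop atTop) {t : α} (h0 : T 0 ≤ t) :
    ∃ k, T k ≤ t ∧ t < T (k + 1) := by
  have hex : ∃ n, t < T n := (hdiv.eventually_gt_atTop t).exists
  obtain ⟨k, hk⟩ : ∃ k, Nat.find hex = k + 1 :=
    Nat.exists_eq_succ_of_ne_zero fun h => (Nat.find_spec hex).not_ge (h ▸ h0)
  exact ⟨k, not_lt.mp (Nat.find_min hex (by omega)), hk ▸ Nat.find_spec hex⟩

theorem sSup_setOf_le_eq_of_mem_Ico {T : ℕ → ℝ≥0} (hT : Monotone T) {k : ℕ} {t : ℝ≥0}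
    (ht : t ∈ Ico (T k) (T (k + 1))) : sSup {j | T j ≤ t} = k :=
  IsGreatest.csSup_eq
    ⟨ht.1, fun _ hj => not_lt.mp fun hkj => (ht.2.trans_le (hT hkj)).not_ge hj⟩

theorem locallyFinite_Icc_of_tendsto_atTop {T : ℕ → ℝ≥0} (hdiv : Tendsto T atTop atTop) :
    LocallyFinite fun k => Icc (T k) (T (k + 1)) := by
  intro t
  refine ⟨Iio (t + 1), isOpen_Iio.mem_nhds (lt_add_one t), ?_⟩
  have hfin : {k | ¬ t + 1 ≤ T k}.Finite := by
    rw [← Filter.eventually_cofinite, Nat.cofinite_eq_atTop]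
    exact hdiv.eventually_ge_atTop (t + 1)
  refine hfin.subset fun k ⟨s, hs, hst⟩ => ?_
  exact not_le.mpr (hs.1.trans_lt hst)

theorem continuous_of_eqOn_Icc {E : Type*} [TopologicalSpace E] {T : ℕ → ℝ≥0} (hT0 : T 0 = 0)
    (hdiv : Tendsto T atTop atTop) {g : ℝ≥0 → E} {φ : ℕ → ℝ≥0 → E} (hφ : ∀ k, Continuous (φ k))
    (hg : ∀ k, EqOn g (φ k) (Icc (T k) (T (k + 1)))) : Continuous g := by
  refine (locallyFinite_Icc_of_tendsto_atTop hdiv).continuous ?_ (fun _ => isClosed_Icc)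
    fun k => (hφ k).continuousOn.congr (hg k)
  refine iUnion_eq_univ_iff.mpr fun t => ?_
  obtain ⟨k, hk⟩ := exists_le_lt_succ_of_tendsto_atTop hdiv (hT0.trans_le zero_le)
  exact ⟨k, hk.1, hk.2.le⟩

section Interpolation

variable {E : Type*} [AddCommGroup E] [Module ℝ E]

def chord (T : ℕ → ℝ≥0) (S : ℕ → E) (k : ℕ) (t : ℝ≥0) : E :=
  S k + (((t : ℝ) - (T k : ℝ)) / ((T (k + 1) : ℝ) - (T k : ℝ))) • (S (k + 1) - S k)

@[simp]
theorem chord_left (T : ℕ → ℝ≥0) (S : ℕ → E) (k : ℕ) : chord T S k (T k) = S k := by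
  simp [chord]

theorem chord_right {T : ℕ → ℝ≥0} (S : ℕ → E) {k : ℕ} (hk : T k < T (k + 1)) :
    chord T S k (T (k + 1)) = S (k + 1) := by
  have hne : (T (k + 1) : ℝ) - (T k : ℝ) ≠ 0 := sub_ne_zero.mpr (by exact_mod_cast hk.ne')
  simp [chord, div_self hne]

theorem continuous_chord [TopologicalSpace E] [IsTopologicalAddGroup E] [ContinuousSMul ℝ E]
    (T : ℕ → ℝ≥0) (S : ℕ → E) (k : ℕ) : Continuous (chord T S k) := by
  unfold chord
  fun_prop

theorem eqOn_chord_Icc {T : ℕ → ℝ≥0} (hT : StrictMono T) {S : ℕ → E} {g : ℝ≥0 → E}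
    (hg : ∀ k, EqOn g (chord T S k) (Ico (T k) (T (k + 1)))) (k : ℕ) :
    EqOn g (chord T S k) (Icc (T k) (T (k + 1))) := by
  intro t ⟨h1, h2⟩
  rcases h2.lt_or_eq with h2 | rfl
  · exact hg k ⟨h1, h2⟩
  · rw [hg (k + 1) ⟨le_rfl, hT (k + 1).lt_succ_self⟩, chord_left,
      chord_right S (hT k.lt_succ_self)]

end Interpolation

section StepFunction

variable {d : ℕ} {x : ℝ≥0 → Fin d → ℝ}

theorem leftLimit_eq_of_eqOn_Ioo {a t : ℝ≥0} (hat : a < t) {c : Fin d → ℝ}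
    (hx : ∀ s ∈ Ioo a t, x s = c) : leftLimit x t = c := by
  have ht : 0 < t := zero_le.trans_lt hat
  have : (𝓝[<] t).NeBot := nhdsLT_neBot_of_exists_lt ⟨0, ht⟩
  rw [leftLimit, if_pos ht]
  refine Tendsto.limUnder_eq (tendsto_const_nhds.congr' ?_)
  filter_upwards [Ioo_mem_nhdsLT hat] with s hs
  exact (hx s hs).symm

theorem eta_eq_zero {t : ℝ≥0} (hx : ∀ s < t, x s = x t) : eta x t = 0 := by
  have : {s | s < t ∧ x s ≠ x t} = ∅ := eq_empty_of_forall_notMem fun s hs => hs.2 (hx s hs.1)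
  rw [eta, this, csSup_empty, bot_eq_zero]

theorem eta_eq_of_eqOn_Ico {a b t : ℝ≥0} (hba : b < a) (hat : a ≤ t)
    (hne : ∀ s ∈ Ico b a, x s ≠ x t) (heq : ∀ s ∈ Ico a t, x s = x t) : eta x t = a := by
  have hsub : {s | s < t ∧ x s ≠ x t} ⊆ Iio a := fun s hs =>
    not_le.mp fun has => hs.2 (heq s ⟨has, hs.1⟩)
  have hIco : Ico b a ⊆ {s | s < t ∧ x s ≠ x t} := fun s hs => ⟨hs.2.trans_le hat, hne s hs⟩
  refine le_antisymm (csSup_le ⟨b, hIco ⟨le_rfl, hba⟩⟩ fun s hs => (hsub hs).le) ?_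
  calc a = sSup (Ico b a) := (csSup_Ico hba).symm
    _ ≤ eta x t := csSup_le_csSup ⟨a, fun s hs => (hsub hs).le⟩ ⟨b, le_rfl, hba⟩ hIco

theorem theta_eq_of_ne_leftLimit {t : ℝ≥0} (h : x t ≠ leftLimit x t) : theta x t = t :=
  le_antisymm (sInf_le ⟨t, ⟨le_rfl, h⟩, rfl⟩) <|
    le_sInf fun _ ⟨_, ⟨hs, _⟩, hs'⟩ => hs' ▸ ENNReal.coe_le_coe.mpr hs

theorem theta_eq_of_eqOn_Ico {b t : ℝ≥0} (htb : t ≤ b)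
    (heq : ∀ s ∈ Ico t b, x s = leftLimit x t) (hne : x b ≠ leftLimit x t) : theta x t = b := by
  refine le_antisymm (sInf_le ⟨b, ⟨htb, hne⟩, rfl⟩) (le_sInf ?_)
  rintro _ ⟨s, ⟨hts, hs⟩, rfl⟩
  exact ENNReal.coe_le_coe.mpr (not_lt.mp fun hsb => hs (heq s ⟨hts, hsb⟩))

def IsStepFunction (x : ℝ≥0 → Fin d → ℝ) (T : ℕ → ℝ≥0) (S : ℕ → Fin d → ℝ) : Prop :=
  ∀ k, ∀ t ∈ Ico (T k) (T (k + 1)), x t = S k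

variable {T : ℕ → ℝ≥0} {S : ℕ → Fin d → ℝ}

theorem IsStepFunction.eta_eq (hx : IsStepFunction x T S) (hT0 : T 0 = 0) (hT : StrictMono T)
    (hS : ∀ k, S (k + 1) ≠ S k) {k : ℕ} {t : ℝ≥0} (ht : t ∈ Ico (T k) (T (k + 1))) :
    eta x t = T k := by
  cases k with
  | zero =>
    rw [hT0]
    refine eta_eq_zero fun s hst => ?_
    rw [hx 0 s ⟨hT0.trans_le zero_le, hst.trans ht.2⟩, hx 0 t ht]
  | succ m =>
    refine eta_eq_of_eqOn_Ico (hT m.lt_succ_self) ht.1 (fun s hs => ?_) fun s hs => ?_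
    · rw [hx m s hs, hx (m + 1) t ht]
      exact (hS m).symm
    · rw [hx (m + 1) s ⟨hs.1, hs.2.trans ht.2⟩, hx (m + 1) t ht]

theorem IsStepFunction.fmap_eq_chord (hx : IsStepFunction x T S) (hT0 : T 0 = 0)
    (hT : StrictMono T) (hS : ∀ k, S (k + 1) ≠ S k) {k : ℕ} {t : ℝ≥0}
    (ht : t ∈ Ico (T k) (T (k + 1))) : fmap x t = chord T S k t := by
  have hxt : x t = S k := hx k t ht
  have heta : eta x t = T k := hx.eta_eq hT0 hT hS ht
  have hxT : x (T (k + 1)) = S (k + 1) := hx (k + 1) _ ⟨le_rfl, hT (k + 1).lt_succ_self⟩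
  by_cases hL : x t = leftLimit x t
  · have htheta : theta x t = T (k + 1) := by
      refine theta_eq_of_eqOn_Ico ht.2.le (fun s hs => ?_) ?_
      · rw [← hL, hxt, hx k s ⟨ht.1.trans hs.1, hs.2⟩]
      · rw [← hL, hxt, hxT]
        exact hS k
    have hnondeg : ¬(theta x t = (eta x t : ℝ≥0∞) ∨ theta x t = ⊤) := by
      rw [htheta, heta, ENNReal.coe_inj]
      exact not_or.mpr ⟨(hT k.lt_succ_self).ne', ENNReal.coe_ne_top⟩
    rw [fmap, if_neg hnondeg, heta, htheta, ENNReal.coe_toReal, ENNReal.toNNReal_coe, hxT,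
      hx k _ ⟨le_rfl, hT k.lt_succ_self⟩, chord]
  · -- `x` is constant just before `t` unless `t = T k`, so `t` must be that jump time.
    have htk : t = T k := by
      refine (ht.1.eq_or_lt.resolve_right fun hlt => hL ?_).symm
      rw [hxt, leftLimit_eq_of_eqOn_Ioo hlt fun s hs => hx k s ⟨hs.1.le, hs.2.trans ht.2⟩]
    have hdeg : theta x t = (eta x t : ℝ≥0∞) ∨ theta x t = ⊤ :=
      .inl (by rw [theta_eq_of_ne_leftLimit hL, heta, htk])
    rw [fmap, if_pos hdeg, hxt, htk, chord_left]

end StepFunction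

theorem cpctrw_eq_fmap_general (d : ℕ)
    (Y : ℕ → Fin d → ℝ) (hY : ∀ k : ℕ, Y k ≠ 0)
    (J : ℕ → ℝ≥0) (hJ : ∀ k : ℕ, 0 < J k)
    (T : ℕ → ℝ≥0) (hT : ∀ n : ℕ, T n = ∑ k ∈ Finset.range n, J k)
    (hdiv : Filter.Tendsto T Filter.atTop Filter.atTop)
    (N : ℝ≥0 → ℕ) (hN : ∀ t : ℝ≥0, N t = sSup {k : ℕ | T k ≤ t})
    (S : ℕ → Fin d → ℝ) (hS : ∀ n : ℕ, S n = ∑ k ∈ Finset.range n, Y k)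
    (X : ℝ≥0 → Fin d → ℝ) (hX : ∀ t : ℝ≥0, X t = S (N t))
    (Xbar : ℝ≥0 → Fin d → ℝ)
    (hXbar : ∀ t : ℝ≥0, Xbar t = S (N t) +
      (((t : ℝ) - (T (N t) : ℝ)) / ((T (N t + 1) : ℝ) - (T (N t) : ℝ))) •
        (S (N t + 1) - S (N t))) :
    (∀ t : ℝ≥0, Xbar t = fmap X t) ∧
    Continuous Xbar ∧
    ∀ k : ℕ, ∀ t ∈ Set.Icc (T k) (T (k + 1)),
      Xbar t = S k +
        (((t : ℝ) - (T k : ℝ)) / ((T (k + 1) : ℝ) - (T k : ℝ))) • (S (k + 1) - S k) := by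
  have hT0 : T 0 = 0 := by simp [hT]
  have hTmono : StrictMono T := strictMono_nat_of_lt_succ fun n => by
    simpa [hT, Finset.sum_range_succ] using hJ n
  have hSne : ∀ n, S (n + 1) ≠ S n := fun n => by
    simpa [hS, Finset.sum_range_succ] using hY n
  have hNk : ∀ k, ∀ t ∈ Ico (T k) (T (k + 1)), N t = k := fun _ t ht =>
    (hN t).trans (sSup_setOf_le_eq_of_mem_Ico hTmono.monotone ht)
  have hXstep : IsStepFunction X T S := fun k t ht => by rw [hX, hNk k t ht]
  have hXbar_Ico : ∀ k, EqOn Xbar (chord T S k) (Ico (T k) (T (k + 1))) := fun k t ht => by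
    rw [hXbar, hNk k t ht, chord]
  have hXbar_Icc := eqOn_chord_Icc hTmono hXbar_Ico
  refine ⟨fun t => ?_, continuous_of_eqOn_Icc hT0 hdiv (continuous_chord T S) hXbar_Icc,
    hXbar_Icc⟩
  obtain ⟨k, hk⟩ := exists_le_lt_succ_of_tendsto_atTop hdiv (hT0.trans_le zero_le)
  rw [hXbar_Ico k hk, hXstep.fmap_eq_chord hT0 hTmono hSne hk]

/-- Under the CTRW setup, the continuous-path CTRW
`X̄(t) = S(N(t)) + ((t − T(N(t)))/(T(N(t)+1) − T(N(t)))) • (S(N(t)+1) − S(N(t)))`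
satisfies `X̄ = f(X)` pointwise; in particular `X̄` is continuous and its trajectory is the
broken line through the points `(T(k), S(k))`. -/
theorem cpctrw_eq_fmap (d : ℕ) (hd : 1 ≤ d)
    (Y : ℕ → Fin d → ℝ) (hY : ∀ k : ℕ, Y k ≠ 0)
    (J : ℕ → ℝ≥0) (hJ : ∀ k : ℕ, 0 < J k)
    (T : ℕ → ℝ≥0) (hT : ∀ n : ℕ, T n = ∑ k ∈ Finset.range n, J k)
    (hdiv : Filter.Tendsto T Filter.atTop Filter.atTop)
    (N : ℝ≥0 → ℕ) (hN : ∀ t : ℝ≥0, N t = sSup {k : ℕ | T k ≤ t})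
    (S : ℕ → Fin d → ℝ) (hS : ∀ n : ℕ, S n = ∑ k ∈ Finset.range n, Y k)
    (X : ℝ≥0 → Fin d → ℝ) (hX : ∀ t : ℝ≥0, X t = S (N t))
    (Xbar : ℝ≥0 → Fin d → ℝ)
    (hXbar : ∀ t : ℝ≥0, Xbar t = S (N t) +
      (((t : ℝ) - (T (N t) : ℝ)) / ((T (N t + 1) : ℝ) - (T (N t) : ℝ))) •
        (S (N t + 1) - S (N t))) :
    (∀ t : ℝ≥0, Xbar t = fmap X t) ∧
    Continuous Xbar ∧
    ∀ k : ℕ, ∀ t ∈ Set.Icc (T k) (T (k + 1)),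
      Xbar t = S k +
        (((t : ℝ) - (T k : ℝ)) / ((T (k + 1) : ℝ) - (T k : ℝ))) • (S (k + 1) - S k) :=
  cpctrw_eq_fmap_general d Y hY J hJ T hT hdiv N hN S hS X hX Xbar hXbar
end
end
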